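/- arXiv:2601.10260 — 2 statements merged into one kernel-verified Lean document; each statement's English description precedes it below -/
import Mathlib

section
/- Let W₁,…,W_n ∈ ℂ^{N×N} be Hermitian positive semidefinite matrices that are linearly independent over ℝ, let G ∈ ℂ^{N×N} be Hermitian positive definite, and for p ∈ ℝⁿ set W(p) = ∑_{i=1}^n p_i W_i. If the feasible set {p ∈ Δ : W(p) is positive definite} is nonempty, then the minimization problem: minimize tr(G · W(p)⁻¹) subject to p ∈ Δ and W(p) positive definite, admits a unique optimal solution. -/
/-!
The objective `V ↦ Re tr (G V⁻¹)` is strictly convex on positive definite matrices: for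
`a + b = 1` one has
`a A⁻¹ + b B⁻¹ - (a A + b B)⁻¹ = a b (A⁻¹ - B⁻¹) (b A⁻¹ + a B⁻¹)⁻¹ (A⁻¹ - B⁻¹)`,
a nonzero positive semidefinite matrix when `A ≠ B`, and `tr (G X) > 0` for such `X`.
Linear independence makes `p ↦ W(p)` injective, so the objective is strictly convex on the
convex feasible set and has at most one minimizer.

For existence, `G ≥ ε` gives `tr (G V⁻¹) ≥ ε tr V⁻¹ ≥ ε / λ_min(V)`, so on a sublevel set of
the objective `W(p)` stays above a fixed positive multiple of the identity. These `p` form a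
compact part of the simplex on which the objective is continuous, and a minimizer there is
global.
-/

open Matrix
open scoped ComplexOrder
open scoped MatrixOrder

theorem exists_isMinOn_of_isCompact_of_sublevel_subset {α β : Type*} [TopologicalSpace α]
    [LinearOrder β] [TopologicalSpace β] [ClosedIicTopology β] {f : α → β} {s K : Set α}
    {x₀ : α} (hx₀ : x₀ ∈ s) (hK : IsCompact K) (hKs : K ⊆ s) (hf : ContinuousOn f K)
    (hsub : ∀ x ∈ s, f x ≤ f x₀ → x ∈ K) : ∃ x ∈ s, IsMinOn f s x := by
  have hx₀K := hsub x₀ hx₀ le_rfl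
  obtain ⟨x, hxK, hmin⟩ := hK.exists_isMinOn ⟨x₀, hx₀K⟩ hf
  refine ⟨x, hKs hxK, fun y hy => ?_⟩
  by_cases hy₀ : f y ≤ f x₀
  · exact hmin (hsub y hy hy₀)
  · exact (hmin hx₀K).trans (le_of_not_ge hy₀)

theorem StrictConvexOn.comp_linearMap_of_injective {𝕜 E F β : Type*} [Semiring 𝕜]
    [PartialOrder 𝕜] [AddCommMonoid E] [AddCommMonoid F] [AddCommMonoid β] [PartialOrder β]
    [Module 𝕜 E] [Module 𝕜 F] [SMul 𝕜 β] {f : F → β} {s : Set F}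
    (hf : StrictConvexOn 𝕜 s f) (g : E →ₗ[𝕜] F) (hg : Function.Injective g) :
    StrictConvexOn 𝕜 (g ⁻¹' s) (f ∘ g) :=
  ⟨hf.1.linear_preimage g, fun _ hx _ hy hxy _ _ ha hb hab => by
    simpa using hf.2 hx hy (hg.ne hxy) ha hb hab⟩

namespace Matrix

variable {n : Type*}

theorem convex_setOf_posDef : Convex ℝ {A : Matrix n n ℂ | A.PosDef} :=
  convex_iff_forall_pos.mpr fun _ hA _ hB _ _ ha hb _ => (hA.smul ha).add (hB.smul hb)

theorem PosDef.of_smul_one_le [DecidableEq n] {A : Matrix n n ℂ} {ε : ℝ} (hε : 0 < ε)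
    (h : ε • (1 : Matrix n n ℂ) ≤ A) : A.PosDef := by
  simpa using PosDef.posSemidef_add (le_iff.mp h) (PosDef.one.smul hε)

variable [Fintype n]

theorem isClosed_setOf_posSemidef : IsClosed {A : Matrix n n ℂ | A.PosSemidef} := by
  have hset : {A : Matrix n n ℂ | A.PosSemidef} =
      {A | Aᴴ = A} ∩ ⋂ x : n → ℂ, {A | 0 ≤ star x ⬝ᵥ A *ᵥ x} := by
    ext A
    simp only [Set.mem_ofPred_eq, Set.mem_inter_iff, Set.mem_iInter,
      posSemidef_iff_dotProduct_mulVec]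
    rfl
  rw [hset]
  exact (isClosed_eq continuous_id.matrix_conjTranspose continuous_id).inter <|
    isClosed_iInter fun x => isClosed_le continuous_const <|
      continuous_const.dotProduct (continuous_id.matrix_mulVec continuous_const)

theorem PosDef.conjTranspose_mul_mul_same_eq_zero_iff {R : Matrix n n ℂ} (hR : R.PosDef)
    {M : Matrix n n ℂ} : Mᴴ * R * M = 0 ↔ M = 0 := by
  refine ⟨fun h => ext_iff_mulVec.mpr fun x => ?_, fun h => by simp [h]⟩
  rw [zero_mulVec]
  by_contra hx
  have := hR.dotProduct_mulVec_pos hx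
  rw [star_mulVec, ← dotProduct_mulVec, mulVec_mulVec, mulVec_mulVec, h,
    zero_mulVec, dotProduct_zero] at this
  exact this.false

variable [DecidableEq n]

theorem continuousOn_re_trace_mul_inv (G : Matrix n n ℂ) :
    ContinuousOn (fun V : Matrix n n ℂ => (G * V⁻¹).trace.re) {V | V.PosDef} := by
  intro V hV
  have hinv : ContinuousAt Inv.inv V := by
    refine continuousAt_matrix_inv V ?_
    rw [Ring.inverse_eq_inv']
    exact continuousAt_inv₀ hV.det_pos.ne'
  have hmap : Continuous fun M : Matrix n n ℂ => (G * M).trace.re :=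
    Complex.continuous_re.comp (continuous_const.matrix_mul continuous_id).matrix_trace
  exact (hmap.continuousAt.comp hinv).continuousWithinAt

theorem PosSemidef.trace_mul_nonneg {A B : Matrix n n ℂ} (hA : A.PosSemidef)
    (hB : B.PosSemidef) : 0 ≤ (A * B).trace := by
  obtain ⟨y, rfl⟩ := CStarAlgebra.nonneg_iff_eq_star_mul_self.mp hA.nonneg
  rw [mul_assoc, trace_mul_comm]
  exact (hB.mul_mul_conjTranspose_same y).trace_nonneg

theorem trace_mul_le_trace_mul_of_le {A₁ A₂ B : Matrix n n ℂ} (hA : A₁ ≤ A₂)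
    (hB : B.PosSemidef) : (A₁ * B).trace ≤ (A₂ * B).trace := by
  have := (le_iff.mp hA).trace_mul_nonneg hB
  rwa [sub_mul, trace_sub, sub_nonneg] at this

theorem PosDef.exists_pos_smul_one_le {A : Matrix n n ℂ} (hA : A.PosDef) :
    ∃ ε > (0 : ℝ), ε • (1 : Matrix n n ℂ) ≤ A := by
  cases isEmpty_or_nonempty n
  · exact ⟨1, one_pos, (Subsingleton.elim _ _).le⟩
  · simp_rw [← Algebra.algebraMap_eq_smul_one]
    exact (CFC.exists_pos_algebraMap_le_iff hA.1).2 fun _ => hA.isStrictlyPositive.spectrum_pos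

theorem PosDef.trace_mul_pos {A B : Matrix n n ℂ} (hA : A.PosDef) (hB : B.PosSemidef)
    (hB0 : B ≠ 0) : 0 < (A * B).trace := by
  obtain ⟨ε, hε, hεA⟩ := hA.exists_pos_smul_one_le
  have htr : 0 < B.trace := hB.trace_nonneg.lt_of_ne' (hB.trace_eq_zero_iff.not.mpr hB0)
  calc 0 < (ε : ℂ) * B.trace := mul_pos (by exact_mod_cast hε) htr
    _ = (ε • 1 * B).trace := by simp [Complex.real_smul]
    _ ≤ (A * B).trace := trace_mul_le_trace_mul_of_le hεA hB

theorem PosSemidef.le_re_trace_of_mem_spectrum {M : Matrix n n ℂ} (hM : M.PosSemidef) {μ : ℝ}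
    (hμ : μ ∈ spectrum ℝ M) : μ ≤ M.trace.re := by
  rw [hM.1.spectrum_real_eq_range_eigenvalues] at hμ
  obtain ⟨i, rfl⟩ := hμ
  rw [hM.1.trace_eq_sum_eigenvalues]
  simpa using Finset.single_le_sum (fun j _ => hM.eigenvalues_nonneg j) (Finset.mem_univ i)

theorem PosDef.inv_smul_one_le_of_re_trace_inv_le {V : Matrix n n ℂ} (hV : V.PosDef) {t : ℝ}
    (h : (V⁻¹).trace.re ≤ t) : t⁻¹ • (1 : Matrix n n ℂ) ≤ V := by
  rw [← Algebra.algebraMap_eq_smul_one, algebraMap_le_iff_le_spectrum hV.1]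
  intro μ hμ
  have hμ0 : 0 < μ := hV.isStrictlyPositive.spectrum_pos hμ
  have hμinv : μ⁻¹ ∈ spectrum ℝ V⁻¹ := by
    lift V to (Matrix n n ℂ)ˣ using hV.isUnit
    rw [← coe_units_inv]
    exact spectrum.inv_mem_iff (r := Units.mk0 μ hμ0.ne') |>.mp hμ
  exact inv_le_of_inv_le₀ hμ0 ((hV.inv.posSemidef.le_re_trace_of_mem_spectrum hμinv).trans h)

theorem PosDef.inv_smul_one_le_of_re_trace_mul_inv_le {G V : Matrix n n ℂ} {ε t : ℝ}
    (hε : 0 < ε) (hG : ε • (1 : Matrix n n ℂ) ≤ G) (hV : V.PosDef)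
    (h : (G * V⁻¹).trace.re ≤ ε * t) : t⁻¹ • (1 : Matrix n n ℂ) ≤ V := by
  refine hV.inv_smul_one_le_of_re_trace_inv_le (le_of_mul_le_mul_left ?_ hε)
  have := (Complex.le_def.mp (trace_mul_le_trace_mul_of_le hG hV.inv.posSemidef)).1
  simp only [smul_mul_assoc, one_mul, trace_smul, Complex.real_smul,
    Complex.re_ofReal_mul] at this
  exact this.trans h

theorem smul_inv_add_smul_inv_sub_inv {A B : Matrix n n ℂ} {a b : ℝ} (hA : IsUnit A)
    (hB : IsUnit B) (hS : IsUnit (b • A⁻¹ + a • B⁻¹)) (hab : a + b = 1) :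
    a • A⁻¹ + b • B⁻¹ - (a • A + b • B)⁻¹ =
      (a * b) • ((A⁻¹ - B⁻¹) * (b • A⁻¹ + a • B⁻¹)⁻¹ * (A⁻¹ - B⁻¹)) := by
  rw [isUnit_iff_isUnit_det] at hA hB hS
  set S := b • A⁻¹ + a • B⁻¹
  have hAS : (a • A + b • B)⁻¹ = B⁻¹ * (S⁻¹ * A⁻¹) := by
    rw [show a • A + b • B = A * (S * B) by
      simp only [S, add_mul, mul_add, smul_mul_assoc, mul_smul_comm, nonsing_inv_mul _ hB,
        ← mul_assoc, mul_nonsing_inv _ hA, one_mul, mul_one]; abel]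
    simp only [Matrix.mul_inv_rev, mul_assoc]
  have hBS : (a • A + b • B)⁻¹ = A⁻¹ * (S⁻¹ * B⁻¹) := by
    rw [show a • A + b • B = B * (S * A) by
      simp only [S, add_mul, mul_add, smul_mul_assoc, mul_smul_comm, nonsing_inv_mul _ hA,
        ← mul_assoc, mul_nonsing_inv _ hB, one_mul, mul_one, add_comm]]
    simp only [Matrix.mul_inv_rev, mul_assoc]
  have hSR : b • (A⁻¹ * S⁻¹) = 1 - a • (B⁻¹ * S⁻¹) := by
    rw [eq_sub_iff_add_eq, ← smul_mul_assoc, ← smul_mul_assoc, ← add_mul,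
      mul_nonsing_inv _ hS]
  have hRS : a • (S⁻¹ * B⁻¹) = 1 - b • (S⁻¹ * A⁻¹) := by
    rw [eq_sub_iff_add_eq, ← mul_smul_comm, ← mul_smul_comm, ← mul_add, add_comm,
      nonsing_inv_mul _ hS]
  calc a • A⁻¹ + b • B⁻¹ - (a • A + b • B)⁻¹
      = a • ((1 - a • (B⁻¹ * S⁻¹)) * A⁻¹) + b • (B⁻¹ * (1 - b • (S⁻¹ * A⁻¹)))
          - ((a * b) • (B⁻¹ * (S⁻¹ * A⁻¹)) + (a * b) • (A⁻¹ * (S⁻¹ * B⁻¹))) := by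
        obtain rfl : b = 1 - a := by linarith
        rw [hAS, hBS.symm.trans hAS]
        simp only [sub_mul, mul_sub, one_mul, mul_one, smul_mul_assoc, mul_smul_comm,
          mul_assoc]
        module
    _ = (a * b) • ((A⁻¹ - B⁻¹) * S⁻¹ * (A⁻¹ - B⁻¹)) := by
        rw [← hSR, ← hRS]
        simp only [sub_mul, mul_sub, smul_mul_assoc, mul_smul_comm, smul_smul, mul_assoc,
          smul_sub]
        module

theorem strictConvexOn_re_trace_mul_inv {G : Matrix n n ℂ} (hG : G.PosDef) :
    StrictConvexOn ℝ {V : Matrix n n ℂ | V.PosDef} fun V => (G * V⁻¹).trace.re := by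
  refine ⟨convex_setOf_posDef, fun A hA B hB hAB a b ha hb hab => ?_⟩
  set D := A⁻¹ - B⁻¹
  set S := b • A⁻¹ + a • B⁻¹
  have hS : S.PosDef := (hA.inv.smul hb).add (hB.inv.smul ha)
  have hD : D ≠ 0 :=
    sub_ne_zero.mpr fun h => hAB (inv_inj h ((isUnit_iff_isUnit_det A).mp hA.isUnit))
  have hDH : Dᴴ = D := (hA.inv.1.sub hB.inv.1).eq
  have hE : (D * S⁻¹ * D).PosSemidef := by
    simpa [hDH] using hS.inv.posSemidef.conjTranspose_mul_mul_same D
  have hE0 : D * S⁻¹ * D ≠ 0 := by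
    simpa [hDH] using hS.inv.conjTranspose_mul_mul_same_eq_zero_iff.not.mpr hD
  have hab0 : 0 < a * b := mul_pos ha hb
  have hpos := hG.trace_mul_pos (hE.smul hab0.le) (smul_ne_zero hab0.ne' hE0)
  rw [← smul_inv_add_smul_inv_sub_inv hA.isUnit hB.isUnit hS.isUnit hab] at hpos
  have := (Complex.lt_def.mp hpos).1
  simp only [mul_sub, mul_add, mul_smul_comm, trace_sub, trace_add, trace_smul, Complex.sub_re,
    Complex.add_re, Complex.real_smul, Complex.re_ofReal_mul, Complex.zero_re] at this
  simp only [smul_eq_mul]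
  linarith

end Matrix

section TraceInverseDesign

variable {ι n : Type*} [Fintype ι] [Fintype n] [DecidableEq n]

def feasibleWeights (W : ι → Matrix n n ℂ) : Set (ι → ℝ) :=
  {p | (∀ i, 0 ≤ p i) ∧ ∑ i, p i = 1 ∧ (∑ i, p i • W i).PosDef}

noncomputable def traceInvObjective (G : Matrix n n ℂ) (W : ι → Matrix n n ℂ) (p : ι → ℝ) :
    ℝ :=
  (G * (∑ i, p i • W i)⁻¹).trace.re

theorem strictConvexOn_traceInvObjective {G : Matrix n n ℂ} (hG : G.PosDef)
    {W : ι → Matrix n n ℂ} (hW : LinearIndependent ℝ W) :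
    StrictConvexOn ℝ (feasibleWeights W) (traceInvObjective G W) := by
  have hset : feasibleWeights W =
      stdSimplex ℝ ι ∩ Fintype.linearCombination ℝ W ⁻¹' {V | V.PosDef} :=
    Set.ext fun _ => and_assoc.symm
  rw [hset]
  exact ((strictConvexOn_re_trace_mul_inv hG).comp_linearMap_of_injective _
    (linearIndependent_iff_injective_fintypeLinearCombination.mp hW)).subset
    Set.inter_subset_right ((convex_stdSimplex ℝ ι).inter <|
      convex_setOf_posDef.linear_preimage _)

theorem exists_isMinOn_traceInvObjective {G : Matrix n n ℂ} (hG : G.PosDef)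
    {W : ι → Matrix n n ℂ} (hW : (feasibleWeights W).Nonempty) :
    ∃ p ∈ feasibleWeights W, IsMinOn (traceInvObjective G W) (feasibleWeights W) p := by
  obtain ⟨p₀, hp₀⟩ := hW
  obtain ⟨ε, hε, hεG⟩ := hG.exists_pos_smul_one_le
  set t := max (traceInvObjective G W p₀ / ε) 1
  have ht : 0 < t := one_pos.trans_le (le_max_right _ _)
  have hWc : Continuous fun p : ι → ℝ => ∑ i, p i • W i := by fun_prop
  have hKs : stdSimplex ℝ ι ∩ {p | t⁻¹ • 1 ≤ ∑ i, p i • W i} ⊆ feasibleWeights W :=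
    fun p ⟨⟨h0, h1⟩, hle⟩ => ⟨h0, h1, PosDef.of_smul_one_le (inv_pos.mpr ht) hle⟩
  refine exists_isMinOn_of_isCompact_of_sublevel_subset hp₀
    ((isCompact_stdSimplex ℝ ι).inter_right
      (isClosed_setOf_posSemidef.preimage (hWc.sub continuous_const))) hKs
    ((continuousOn_re_trace_mul_inv G).comp hWc.continuousOn fun p hp => (hKs hp).2.2)
    fun p hp hle =>
      ⟨⟨hp.1, hp.2.1⟩, hp.2.2.inv_smul_one_le_of_re_trace_mul_inv_le hε hεG ?_⟩
  calc traceInvObjective G W p ≤ traceInvObjective G W p₀ := hle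
    _ ≤ ε * t := (div_le_iff₀' hε).mp (le_max_left _ _)

end TraceInverseDesign

theorem stmt7_general {n N : ℕ} (W : Fin n → Matrix (Fin N) (Fin N) ℂ)
    (hli : LinearIndependent ℝ W)
    (G : Matrix (Fin N) (Fin N) ℂ) (hG : G.PosDef)
    (hfeas : ∃ p : Fin n → ℝ, (∀ i, 0 ≤ p i) ∧ ∑ i, p i = 1 ∧
      (∑ i, p i • W i).PosDef) :
    ∃! p : Fin n → ℝ,
      ((∀ i, 0 ≤ p i) ∧ ∑ i, p i = 1 ∧ (∑ i, p i • W i).PosDef) ∧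
      ∀ q : Fin n → ℝ, ((∀ i, 0 ≤ q i) ∧ ∑ i, q i = 1 ∧ (∑ i, q i • W i).PosDef) →
        (Matrix.trace (G * (∑ i, p i • W i)⁻¹)).re
          ≤ (Matrix.trace (G * (∑ i, q i • W i)⁻¹)).re := by
  obtain ⟨p, hp, hmin⟩ := exists_isMinOn_traceInvObjective hG hfeas
  exact ⟨p, ⟨hp, hmin⟩, fun q hq =>
    (strictConvexOn_traceInvObjective hG hli).eq_of_isMinOn hq.2 hmin hq.1 hp⟩

theorem stmt7 {n N : ℕ} (W : Fin n → Matrix (Fin N) (Fin N) ℂ)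
    (hpsd : ∀ i, (W i).PosSemidef)
    (hli : LinearIndependent ℝ W)
    (G : Matrix (Fin N) (Fin N) ℂ) (hG : G.PosDef)
    (hfeas : ∃ p : Fin n → ℝ, (∀ i, 0 ≤ p i) ∧ ∑ i, p i = 1 ∧
      (∑ i, p i • W i).PosDef) :
    ∃! p : Fin n → ℝ,
      ((∀ i, 0 ≤ p i) ∧ ∑ i, p i = 1 ∧ (∑ i, p i • W i).PosDef) ∧
      ∀ q : Fin n → ℝ, ((∀ i, 0 ≤ q i) ∧ ∑ i, q i = 1 ∧ (∑ i, q i • W i).PosDef) →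
        (Matrix.trace (G * (∑ i, p i • W i)⁻¹)).re
          ≤ (Matrix.trace (G * (∑ i, q i • W i)⁻¹)).re :=
  stmt7_general W hli G hG hfeas
end

section
/- Let λ, μ ∈ ℂ with Re(λ) = Re(μ) = 0, let k, ℓ ≥ 1, let J₁ = λI_k + N_k and J₂ = μI_ℓ + N_ℓ, let D₁(T) = diag(T^{k−1/2}, …, T^{1/2}) and D₂(T) = diag(T^{ℓ−1/2}, …, T^{1/2}), and let B ∈ ℂ^{k×ℓ} with lower-right entry b = B_{k,ℓ}. Then D₁(T)⁻¹ (∫₀^T e^{J₁t} B e^{J₂*t} dt) D₂(T)^{−*} converges as T → ∞; the limit is the zero matrix if λ ≠ μ, and if λ = μ the limit is b·C, where C ∈ ℂ^{k×ℓ} is the matrix with (a,c) entry 1/((k−a)! (ℓ−c)! (k−a+ℓ−c+1)) for 1 ≤ a ≤ k, 1 ≤ c ≤ ℓ. -/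
open Matrix Filter intervalIntegral

/-- Matrix exponential `e^{tC}` of a complex matrix. -/
noncomputable def cMatExp {k : ℕ} (C : Matrix (Fin k) (Fin k) ℂ) (t : ℝ) :
    Matrix (Fin k) (Fin k) ℂ :=
  NormedSpace.exp ((t : ℂ) • C)

/-- The `k×k` nilpotent Jordan block with ones on the superdiagonal. -/
def nilpBlock (k : ℕ) : Matrix (Fin k) (Fin k) ℂ :=
  Matrix.of fun i j => if (i : ℕ) + 1 = (j : ℕ) then 1 else 0

/-- The scaling matrix `D(T) = diag(T^{k−1/2}, T^{k−3/2}, …, T^{1/2})`. -/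
noncomputable def scaleD (k : ℕ) (T : ℝ) : Matrix (Fin k) (Fin k) ℂ :=
  Matrix.diagonal fun a => ((T ^ ((k : ℝ) - (a : ℕ) - 1/2) : ℝ) : ℂ)

/-- The matrix `C` with (1-indexed) `(a,c)` entry `1/((k−a)! (ℓ−c)! (k−a+ℓ−c+1))`. -/
noncomputable def limMat (k l : ℕ) : Matrix (Fin k) (Fin l) ℂ :=
  Matrix.of fun a c =>
    (((k - 1 - (a : ℕ)).factorial * (l - 1 - (c : ℕ)).factorial *
        ((k - 1 - (a : ℕ)) + (l - 1 - (c : ℕ)) + 1) : ℕ) : ℂ)⁻¹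

open Complex ComplexConjugate Topology Asymptotics
open scoped Nat

/-!
Since `J = λI + N` with `N` nilpotent, `e^{Jt} = e^{λt} ∑ tⁿ Nⁿ / n!`, so entry `(a, c)` of
`e^{J₁t} B e^{J₂*t}` is a combination of the functions `t^m e^{ωt}` with `ω = λ + μ̄ = λ - μ` purely
imaginary, while the scaling divides that entry by `T^n` with `n` larger than every `m` occurring.
Now `T^{-n} ∫₀^T t^m e^{ωt} dt → 0` unless `ω = 0` and `m = n - 1`, and that exponent comes only
from the corner entry `B_{kℓ}`: for `ω = 0` the integral is `T^{m+1}/(m+1)`, and for `ω ≠ 0` one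
integration by parts bounds it by `2 T^m / |ω|`.
-/

theorem NormedSpace.exp_eq_sum_range_of_pow_eq_zero {𝔸 : Type*} [Ring 𝔸] [Algebra ℚ 𝔸]
    [TopologicalSpace 𝔸] [IsTopologicalRing 𝔸] {x : 𝔸} {k : ℕ} (hx : x ^ k = 0) :
    NormedSpace.exp x = ∑ n ∈ Finset.range k, (n !⁻¹ : ℚ) • x ^ n := by
  rw [NormedSpace.exp_eq_tsum ℚ]
  exact tsum_eq_sum fun n hn => by
    rw [pow_eq_zero_of_le (by simpa using hn) hx, smul_zero]

theorem nilpBlock_pow_apply (k n : ℕ) (i j : Fin k) :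
    (nilpBlock k ^ n) i j = if (i : ℕ) + n = j then 1 else 0 := by
  induction n generalizing j with
  | zero => simp [one_apply, Fin.ext_iff]
  | succ n ih =>
    rw [pow_succ, mul_apply, Finset.sum_eq_single_of_mem ⟨j - 1, by omega⟩ (Finset.mem_univ _)]
    · rw [ih]
      simp only [nilpBlock, of_apply]
      split_ifs <;> first | omega | simp
    · intro x _ hx
      have hx' : (x : ℕ) ≠ j - 1 := fun h => hx (Fin.ext h)
      rw [ih]
      simp only [nilpBlock, of_apply]
      split_ifs <;> first | omega | simp

theorem nilpBlock_pow_self (k : ℕ) : nilpBlock k ^ k = 0 := by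
  ext i j
  rw [nilpBlock_pow_apply, if_neg (by omega), Matrix.zero_apply]

theorem cMatExp_jordan_apply {k : ℕ} (c : ℂ) (t : ℝ) (i j : Fin k) :
    cMatExp (c • 1 + nilpBlock k) t i j =
      exp (c * t) * if (i : ℕ) ≤ j then (t : ℂ) ^ (j - i : ℕ) / (j - i : ℕ)! else 0 := by
  have hdiag : (t : ℂ) • c • (1 : Matrix (Fin k) (Fin k) ℂ) = diagonal fun _ => c * t := by
    rw [smul_smul, mul_comm, smul_one_eq_diagonal]
  have hnil : ((t : ℂ) • nilpBlock k) ^ k = 0 := by rw [smul_pow, nilpBlock_pow_self, smul_zero]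
  have hcomm : Commute ((t : ℂ) • c • (1 : Matrix (Fin k) (Fin k) ℂ)) ((t : ℂ) • nilpBlock k) :=
    (((Commute.one_left _).smul_left c).smul_left _).smul_right _
  rw [cMatExp, smul_add, exp_add_of_commute _ _ hcomm, hdiag, exp_diagonal,
    NormedSpace.exp_eq_sum_range_of_pow_eq_zero hnil, diagonal_mul, Pi.coe_exp,
    ← Complex.exp_eq_exp_ℂ, Matrix.sum_apply]
  congr 1
  simp only [Matrix.smul_apply, smul_pow, nilpBlock_pow_apply, Rat.smul_def, smul_eq_mul]
  split_ifs with h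
  · rw [Finset.sum_eq_single_of_mem (j - i : ℕ) (Finset.mem_range.2 (by omega))]
    · simp [Nat.add_sub_cancel' h, div_eq_inv_mul]
    · intro n _ hn
      simp [show (i : ℕ) + n ≠ j by omega]
  · exact Finset.sum_eq_zero fun n _ => by simp [show (i : ℕ) + n ≠ j by omega]

theorem cMatExp_conjTranspose {k : ℕ} (M : Matrix (Fin k) (Fin k) ℂ) (t : ℝ) :
    cMatExp Mᴴ t = (cMatExp M t)ᴴ := by
  rw [cMatExp, cMatExp, ← exp_conjTranspose, conjTranspose_smul, Complex.star_def, conj_ofReal]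

theorem cMatExp_jordan_conjTranspose_apply {k : ℕ} (c : ℂ) (t : ℝ) (i j : Fin k) :
    cMatExp (c • 1 + nilpBlock k)ᴴ t i j =
      exp (conj c * t) * if (j : ℕ) ≤ i then (t : ℂ) ^ (i - j : ℕ) / (i - j : ℕ)! else 0 := by
  rw [cMatExp_conjTranspose, conjTranspose_apply, cMatExp_jordan_apply, star_mul']
  split_ifs <;> simp [← Complex.exp_conj]

section JordanIntegrand

variable {k l : ℕ} (B : Matrix (Fin k) (Fin l) ℂ) (a : Fin k) (c : Fin l)

noncomputable def jordanCoeff (i : Fin k) (j : Fin l) : ℂ :=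
  if (a : ℕ) ≤ i ∧ (c : ℕ) ≤ j then B i j / ((i - a : ℕ)! * (j - c : ℕ)!) else 0

theorem jordan_integrand_apply (lam mu : ℂ) (t : ℝ) :
    (cMatExp (lam • (1 : Matrix (Fin k) (Fin k) ℂ) + nilpBlock k) t * B *
      cMatExp (mu • (1 : Matrix (Fin l) (Fin l) ℂ) + nilpBlock l)ᴴ t) a c =
      ∑ i, ∑ j, jordanCoeff B a c i j *
        ((t : ℂ) ^ ((i - a : ℕ) + (j - c : ℕ)) * exp ((lam + conj mu) * t)) := by
  simp only [mul_apply, Finset.sum_mul]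
  rw [Finset.sum_comm]
  refine Finset.sum_congr rfl fun i _ => Finset.sum_congr rfl fun j _ => ?_
  rw [cMatExp_jordan_apply, cMatExp_jordan_conjTranspose_apply, jordanCoeff, pow_add, add_mul,
    Complex.exp_add]
  by_cases h : (a : ℕ) ≤ i ∧ (c : ℕ) ≤ j
  · rw [if_pos h.1, if_pos h.2, if_pos h]
    field_simp
  · rw [if_neg h, zero_mul]
    split_ifs <;> simp_all

theorem integral_jordan_integrand_apply (lam mu : ℂ) (T : ℝ) :
    ∫ t in (0 : ℝ)..T, (cMatExp (lam • (1 : Matrix (Fin k) (Fin k) ℂ) + nilpBlock k) t * B *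
      cMatExp (mu • (1 : Matrix (Fin l) (Fin l) ℂ) + nilpBlock l)ᴴ t) a c =
      ∑ i, ∑ j, jordanCoeff B a c i j *
        ∫ t in (0 : ℝ)..T, (t : ℂ) ^ ((i - a : ℕ) + (j - c : ℕ)) * exp ((lam + conj mu) * t) := by
  have hcont : ∀ i j, Continuous fun t : ℝ => jordanCoeff B a c i j *
      ((t : ℂ) ^ ((i - a : ℕ) + (j - c : ℕ)) * exp ((lam + conj mu) * t)) :=
    fun _ _ => by fun_prop
  simp_rw [jordan_integrand_apply]
  rw [integral_finsetSum fun i _ =>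
    (continuous_finsetSum _ fun j _ => hcont i j).intervalIntegrable _ _]
  refine Finset.sum_congr rfl fun i _ => ?_
  rw [integral_finsetSum fun j _ => (hcont i j).intervalIntegrable _ _]
  simp_rw [integral_const_mul]

theorem sum_jordanCoeff_mul_ite (p : Prop) [Decidable p] :
    ∑ i, ∑ j, jordanCoeff B a c i j *
        (if p ∧ (k - 1 - a) + (l - 1 - c) + 1 = (i - a : ℕ) + (j - c : ℕ) + 1 then
          (((i - a : ℕ) + (j - c : ℕ) + 1 : ℕ) : ℂ)⁻¹ else 0) =
      if p then B ⟨k - 1, Nat.sub_one_lt_of_lt a.isLt⟩ ⟨l - 1, Nat.sub_one_lt_of_lt c.isLt⟩ *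
        limMat k l a c else 0 := by
  split_ifs with hp
  · simp only [hp, true_and]
    rw [← Fintype.sum_prod_type',
      Fintype.sum_eq_single
        (⟨k - 1, Nat.sub_one_lt_of_lt a.isLt⟩, ⟨l - 1, Nat.sub_one_lt_of_lt c.isLt⟩)]
    · have ha : (a : ℕ) ≤ k - 1 := Nat.le_sub_one_of_lt a.isLt
      have hc : (c : ℕ) ≤ l - 1 := Nat.le_sub_one_of_lt c.isLt
      simp only [jordanCoeff, limMat, of_apply, if_pos (And.intro ha hc), if_true, Nat.cast_mul,
        mul_inv]
      ring
    · rintro ⟨i, j⟩ hij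
      simp only [jordanCoeff]
      split_ifs with hle hdeg
      · have hi := i.isLt
        have hj := j.isLt
        exact absurd (Prod.ext (Fin.ext (show (i : ℕ) = k - 1 by omega))
          (Fin.ext (show (j : ℕ) = l - 1 by omega))) hij
      all_goals simp
  · simp [hp]

end JordanIntegrand

section OscillatoryIntegral

variable {ω : ℂ}

theorem norm_exp_mul_ofReal (hω : ω.re = 0) (t : ℝ) : ‖exp (ω * t)‖ = 1 := by
  simp [Complex.norm_exp, hω]

theorem norm_integral_pow_mul_exp_le (hω : ω.re = 0) (m : ℕ) {T : ℝ} (hT : 0 ≤ T) :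
    ‖∫ t in (0 : ℝ)..T, (t : ℂ) ^ m * exp (ω * t)‖ ≤ T ^ (m + 1) := by
  have hbound : ∀ t ∈ Set.uIoc (0 : ℝ) T, ‖(t : ℂ) ^ m * exp (ω * t)‖ ≤ T ^ m := by
    intro t ht
    rw [Set.uIoc_of_le hT] at ht
    rw [norm_mul, norm_exp_mul_ofReal hω, mul_one, norm_pow, Complex.norm_real,
      Real.norm_of_nonneg ht.1.le]
    exact pow_le_pow_left₀ ht.1.le ht.2 m
  calc _ ≤ T ^ m * |T - 0| := norm_integral_le_of_norm_le_const hbound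
    _ = T ^ (m + 1) := by rw [sub_zero, abs_of_nonneg hT, pow_succ]

theorem norm_integral_pow_mul_exp_le_of_ne_zero (hω : ω.re = 0) (hω0 : ω ≠ 0) (m : ℕ) {T : ℝ}
    (hT : 0 ≤ T) : ‖∫ t in (0 : ℝ)..T, (t : ℂ) ^ m * exp (ω * t)‖ ≤ 2 / ‖ω‖ * T ^ m := by
  have hu : ∀ t : ℝ, HasDerivAt (fun s : ℝ => (s : ℂ) ^ m) (m * (t : ℂ) ^ (m - 1)) t :=
    fun t => (hasDerivAt_pow m (t : ℂ)).comp_ofReal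
  have hv : ∀ t : ℝ, HasDerivAt (fun s : ℝ => exp (ω * s) / ω) (exp (ω * t)) t := by
    intro t
    simpa [mul_div_cancel_right₀ _ hω0] using
      (((hasDerivAt_id (t : ℂ)).const_mul ω).cexp.comp_ofReal).div_const ω
  have hparts := integral_mul_deriv_eq_deriv_mul (a := 0) (b := T) (fun t _ => hu t)
    (fun t _ => hv t) (by apply Continuous.intervalIntegrable; fun_prop)
    (by apply Continuous.intervalIntegrable; fun_prop)
  have hderiv : ∫ t in (0 : ℝ)..T, (m : ℝ) * t ^ (m - 1) = T ^ m - 0 ^ m :=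
    integral_eq_sub_of_hasDerivAt (fun t _ => hasDerivAt_pow m t)
      (by apply Continuous.intervalIntegrable; fun_prop)
  have hrest : ‖∫ t in (0 : ℝ)..T, (m * (t : ℂ) ^ (m - 1)) * (exp (ω * t) / ω)‖ ≤
      (T ^ m - 0 ^ m) / ‖ω‖ := by
    rw [← hderiv, ← intervalIntegral.integral_div]
    refine norm_integral_le_of_norm_le hT (Filter.Eventually.of_forall fun t ht => ?_)
      (by apply Continuous.intervalIntegrable; fun_prop)
    rw [norm_mul, norm_div, norm_exp_mul_ofReal hω, norm_mul, norm_pow, Complex.norm_real,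
      Real.norm_of_nonneg ht.1.le, Complex.norm_natCast, mul_one_div]
  rw [hparts]
  calc _ ≤ ‖(T : ℂ) ^ m * (exp (ω * T) / ω)‖ + ‖((0 : ℝ) : ℂ) ^ m * (exp (ω * (0 : ℝ)) / ω)‖ +
        ‖∫ t in (0 : ℝ)..T, (m * (t : ℂ) ^ (m - 1)) * (exp (ω * t) / ω)‖ :=
        norm_sub_le_of_le (norm_sub_le _ _) le_rfl
    _ ≤ T ^ m / ‖ω‖ + 0 ^ m / ‖ω‖ + (T ^ m - 0 ^ m) / ‖ω‖ := by
      gcongr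
      · simp [norm_exp_mul_ofReal hω, abs_of_nonneg hT, div_eq_mul_inv]
      · simp [div_eq_mul_inv]
    _ = 2 / ‖ω‖ * T ^ m := by ring

end OscillatoryIntegral

theorem tendsto_div_pow_atTop_of_isBigO {f : ℝ → ℂ} {m n : ℕ}
    (hf : f =O[atTop] fun T => T ^ m) (hmn : m < n) :
    Tendsto (fun T => f T / (T : ℂ) ^ n) atTop (𝓝 0) := by
  have h : (fun T => f T / (T : ℂ) ^ n) =O[atTop] fun T => T ^ m / T ^ n := by
    simp_rw [div_eq_mul_inv]
    exact hf.mul (IsBigO.of_bound 1 (Eventually.of_forall fun T => by simp))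
  exact h.trans_tendsto (tendsto_pow_div_pow_atTop_zero hmn)

theorem integral_pow_div_pow_succ (m : ℕ) {T : ℝ} (hT : T ≠ 0) :
    (∫ t in (0 : ℝ)..T, (t : ℂ) ^ m) / (T : ℂ) ^ (m + 1) = ((m + 1 : ℕ) : ℂ)⁻¹ := by
  have hT' : (T : ℂ) ≠ 0 := ofReal_ne_zero.2 hT
  simp_rw [← ofReal_pow, intervalIntegral.integral_ofReal, integral_pow]
  push_cast
  field_simp
  ring

theorem tendsto_integral_pow_mul_exp_div_pow {ω : ℂ} (hω : ω.re = 0) {m n : ℕ} (hmn : m < n) :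
    Tendsto (fun T : ℝ => (∫ t in (0 : ℝ)..T, (t : ℂ) ^ m * exp (ω * t)) / (T : ℂ) ^ n) atTop
      (𝓝 (if ω = 0 ∧ n = m + 1 then ((m + 1 : ℕ) : ℂ)⁻¹ else 0)) := by
  split_ifs with h
  · obtain ⟨rfl, rfl⟩ := h
    refine tendsto_const_nhds.congr' ?_
    filter_upwards [eventually_ne_atTop 0] with T hT
    simpa using (integral_pow_div_pow_succ m hT).symm
  rcases not_and_or.1 h with hω0 | hn
  · refine tendsto_div_pow_atTop_of_isBigO (IsBigO.of_bound (2 / ‖ω‖) ?_) hmn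
    filter_upwards [eventually_ge_atTop 0] with T hT
    rw [Real.norm_of_nonneg (pow_nonneg hT m)]
    exact norm_integral_pow_mul_exp_le_of_ne_zero hω hω0 m hT
  · refine tendsto_div_pow_atTop_of_isBigO (IsBigO.of_bound 1 ?_) (by omega : m + 1 < n)
    filter_upwards [eventually_ge_atTop 0] with T hT
    rw [Real.norm_of_nonneg (pow_nonneg hT _), one_mul]
    exact norm_integral_pow_mul_exp_le hω m hT

theorem scaleD_inv {k : ℕ} {T : ℝ} (hT : 0 < T) :
    (scaleD k T)⁻¹ = diagonal fun a : Fin k => (((T ^ ((k : ℝ) - (a : ℕ) - 1/2))⁻¹ : ℝ) : ℂ) := by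
  refine inv_eq_right_inv ?_
  rw [scaleD, diagonal_mul_diagonal, ← diagonal_one]
  congr 1
  ext a
  rw [← ofReal_mul, mul_inv_cancel₀ (Real.rpow_pos_of_pos hT _).ne', ofReal_one]

theorem rpow_sub_half_mul_rpow_sub_half {k l : ℕ} (a : Fin k) (c : Fin l) {T : ℝ} (hT : 0 < T) :
    T ^ ((k : ℝ) - (a : ℕ) - 1/2) * T ^ ((l : ℝ) - (c : ℕ) - 1/2) =
      T ^ ((k - 1 - a) + (l - 1 - c) + 1 : ℕ) := by
  rw [← Real.rpow_add hT, ← Real.rpow_natCast]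
  congr 1
  have hsum : (k - 1 - a + (l - 1 - c) + 1 : ℕ) + a + c + 1 = k + l := by omega
  have hsum' : ((k - 1 - a + (l - 1 - c) + 1 : ℕ) : ℝ) + a + c + 1 = k + l := by
    exact_mod_cast hsum
  linarith

theorem scaleD_inv_mul_mul_conjTranspose_apply {k l : ℕ} (M : Matrix (Fin k) (Fin l) ℂ)
    {T : ℝ} (hT : 0 < T) (a : Fin k) (c : Fin l) :
    ((scaleD k T)⁻¹ * M * ((scaleD l T)⁻¹)ᴴ) a c =
      M a c / (T : ℂ) ^ ((k - 1 - a) + (l - 1 - c) + 1 : ℕ) := by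
  rw [scaleD_inv hT, scaleD_inv hT, diagonal_conjTranspose, mul_diagonal, diagonal_mul,
    Pi.star_apply, Complex.star_def, conj_ofReal, ← ofReal_pow,
    ← rpow_sub_half_mul_rpow_sub_half a c hT]
  push_cast
  ring

theorem stmt14 (k l : ℕ) (hk : 1 ≤ k) (hl : 1 ≤ l)
    (lam mu : ℂ) (hlam : lam.re = 0) (hmu : mu.re = 0)
    (J₁ : Matrix (Fin k) (Fin k) ℂ)
    (hJ₁ : J₁ = lam • (1 : Matrix (Fin k) (Fin k) ℂ) + nilpBlock k)
    (J₂ : Matrix (Fin l) (Fin l) ℂ)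
    (hJ₂ : J₂ = mu • (1 : Matrix (Fin l) (Fin l) ℂ) + nilpBlock l)
    (B : Matrix (Fin k) (Fin l) ℂ) (b : ℂ) (hb : b = B ⟨k - 1, by omega⟩ ⟨l - 1, by omega⟩) :
    ∀ a c, Filter.Tendsto
      (fun T : ℝ =>
        ((scaleD k T)⁻¹ *
          (Matrix.of fun a' c' =>
            ∫ t in (0:ℝ)..T, (cMatExp J₁ t * B * cMatExp J₂ᴴ t) a' c') *
          ((scaleD l T)⁻¹)ᴴ) a c)
      Filter.atTop (nhds (if lam = mu then b * limMat k l a c else 0)) := by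
  intro a c
  subst hJ₁ hJ₂ hb
  have hconj : conj mu = -mu := Complex.ext (by simp [hmu]) (by simp)
  have hω : (lam + conj mu).re = 0 := by simp [hlam, hmu]
  have hω0 : lam + conj mu = 0 ↔ lam = mu := by rw [hconj, ← sub_eq_add_neg, sub_eq_zero]
  have hdeg : ∀ (i : Fin k) (j : Fin l),
      (i - a : ℕ) + (j - c : ℕ) < (k - 1 - a) + (l - 1 - c) + 1 := fun i j => by
    have := i.isLt
    have := j.isLt
    omega
  have hlim := tendsto_finsetSum Finset.univ fun i _ => tendsto_finsetSum Finset.univ fun j _ =>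
    (tendsto_integral_pow_mul_exp_div_pow hω (hdeg i j)).const_mul (jordanCoeff B a c i j)
  simp only [hω0, sum_jordanCoeff_mul_ite] at hlim
  refine hlim.congr' ?_
  filter_upwards [eventually_gt_atTop 0] with T hT
  rw [scaleD_inv_mul_mul_conjTranspose_apply _ hT, of_apply, integral_jordan_integrand_apply]
  simp_rw [Finset.sum_div, mul_div_assoc]
end
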